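/- (Regular values are uniquely v-representable.) Let ρ ∈ V* be pure-state v-representable, i.e., there exist v ∈ V and a pure ground state Γ of ι(v)+W with ι*(Γ) = ρ. Suppose ρ satisfies the following regularity condition: for every unit vector Ψ with ι*(|Ψ⟩⟨Ψ|) = ρ, the real-linear map from { φ ∈ H : ⟨φ, Ψ⟩ = 0 } to V* sending φ to the functional v ↦ 2 Re⟨φ, ι(v)Ψ⟩ has image equal to the direction space of the affine span of ι*(P). Then ρ is uniquely v-representable: for any v, v' ∈ V such that ρ is the density of some pure ground state of ι(v)+W and of some pure ground state of ι(v')+W, the operator ι(v) − ι(v') is a real scalar multiple of the identity. -/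

import Mathlib

open Filter Topology

noncomputable section

variable {V H : Type*}
  [AddCommGroup V] [Module ℝ V]
  [NormedAddCommGroup H] [InnerProductSpace ℂ H]

/-- The real expectation value `⟨ψ, T ψ⟩` of an operator `T` in the vector `ψ`. -/
def expectation (T : H →ₗ[ℂ] H) (ψ : H) : ℝ := (inner ℂ ψ (T ψ) : ℂ).re

/-- The ground state energy of the Hamiltonian `ι v + W`. -/
def energy (ι : V →ₗ[ℝ] (H →ₗ[ℂ] H)) (W : H →ₗ[ℂ] H) (v : V) : ℝ :=
  sInf {r : ℝ | ∃ ψ : H, ‖ψ‖ = 1 ∧ r = expectation (ι v + W) ψ}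

/-- The density `ι*(|ψ⟩⟨ψ|)` of the pure state given by the unit vector `ψ`,
as an element of the dual space `V*`. -/
def pureDensity (ι : V →ₗ[ℝ] (H →ₗ[ℂ] H)) (ψ : H) : Module.Dual ℝ V where
  toFun v := expectation (ι v) ψ
  map_add' v w := by simp [expectation, inner_add_right]
  map_smul' c v := by
    simp only [map_smul, LinearMap.smul_apply, expectation, RingHom.id_apply, smul_eq_mul]
    rw [← algebraMap_smul ℂ c ((ι v) ψ), Complex.coe_algebraMap, inner_smul_right]
    simp

/-- An ensemble state: a positive semidefinite operator of unit trace. -/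
def IsEnsembleState (Γ : H →ₗ[ℂ] H) : Prop :=
  Γ.IsSymmetric ∧ (∀ x : H, 0 ≤ (inner ℂ x (Γ x) : ℂ).re) ∧ LinearMap.trace ℂ H Γ = 1

/-- The density `ι*(Γ)` of a state `Γ`, `v ↦ Tr(Γ ι(v))`, as an element of `V*`. -/
def traceDensity (ι : V →ₗ[ℝ] (H →ₗ[ℂ] H)) (Γ : H →ₗ[ℂ] H) : Module.Dual ℝ V where
  toFun v := (LinearMap.trace ℂ H (ι v ∘ₗ Γ)).re
  map_add' v w := by simp [map_add, LinearMap.add_comp]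
  map_smul' c v := by
    simp only [map_smul, RingHom.id_apply, smul_eq_mul]
    rw [← algebraMap_smul ℂ c (ι v), LinearMap.smul_comp, map_smul, Complex.coe_algebraMap]
    simp

/-- The pure (Levy–Lieb) universal functional `F_p`. -/
def Fp (ι : V →ₗ[ℝ] (H →ₗ[ℂ] H)) (W : H →ₗ[ℂ] H) (ρ : Module.Dual ℝ V) : ℝ :=
  sInf {r : ℝ | ∃ ψ : H, ‖ψ‖ = 1 ∧ pureDensity ι ψ = ρ ∧ r = expectation W ψ}

/-- The ensemble (Lieb/Valone) universal functional `F_e`. -/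
def Fe (ι : V →ₗ[ℝ] (H →ₗ[ℂ] H)) (W : H →ₗ[ℂ] H) (ρ : Module.Dual ℝ V) : ℝ :=
  sInf {r : ℝ | ∃ Γ : H →ₗ[ℂ] H, IsEnsembleState Γ ∧ traceDensity ι Γ = ρ ∧
    r = (LinearMap.trace ℂ H (W ∘ₗ Γ)).re}

/-- The weight space of a functional `α ∈ V*`. -/
def weightSpace (ι : V →ₗ[ℝ] (H →ₗ[ℂ] H)) (α : Module.Dual ℝ V) : Submodule ℂ H where
  carrier := {ψ : H | ∀ v : V, ι v ψ = (α v : ℂ) • ψ}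
  add_mem' := by
    intro a b ha hb v
    rw [map_add, ha v, hb v, smul_add]
  zero_mem' := by intro v; simp
  smul_mem' := by
    intro c x hx v
    rw [LinearMap.map_smul, hx v, smul_comm]

/-- The set of weights of an abelian functional theory. -/
def weights (ι : V →ₗ[ℝ] (H →ₗ[ℂ] H)) : Set (Module.Dual ℝ V) :=
  {α : Module.Dual ℝ V | weightSpace ι α ≠ ⊥}

/-- The derivative of the density map along the set of pure states at `|Ψ⟩⟨Ψ|`,
applied to the tangent vector `φ ⊥ Ψ`: the functional `v ↦ 2 Re⟨φ, ι(v)Ψ⟩`. -/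
def derivDensity (ι : V →ₗ[ℝ] (H →ₗ[ℂ] H)) (Ψ φ : H) : Module.Dual ℝ V where
  toFun v := 2 * (inner ℂ φ (ι v Ψ) : ℂ).re
  map_add' v w := by simp [inner_add_right]; ring
  map_smul' c v := by
    simp only [map_smul, LinearMap.smul_apply, RingHom.id_apply, smul_eq_mul]
    rw [← algebraMap_smul ℂ c ((ι v) Ψ), Complex.coe_algebraMap, inner_smul_right]
    simp; ring

/-- `ρ` is a relative interior point of the convex set `C` (i.e. an interior point
of `C` within its affine span): every point of `C` lies on a segment inside `C`
having `ρ` in its (open) interior. -/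
def IsRelInterior {M : Type*} [AddCommGroup M] [Module ℝ M] (C : Set M) (ρ : M) : Prop :=
  ρ ∈ C ∧ ∀ σ ∈ C, ∃ τ ∈ C, ∃ t : ℝ, 0 < t ∧ t < 1 ∧ ρ = t • σ + (1 - t) • τ

/-- Strong orthogonality: componentwise orthogonality in every weight space. -/
def StronglyOrthogonal [FiniteDimensional ℂ H] (ι : V →ₗ[ℝ] (H →ₗ[ℂ] H)) (Φ Φ' : H) : Prop :=
  ∀ α : Module.Dual ℝ V, weightSpace ι α ≠ ⊥ →
    (inner ℂ (Submodule.orthogonalProjectionOnto (weightSpace ι α) Φ)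
        (Submodule.orthogonalProjectionOnto (weightSpace ι α) Φ') : ℂ) = 0

/-- The `k`-convex hull of a set. -/
def convk {M : Type*} [AddCommGroup M] [Module ℝ M] (k : ℕ) (X : Set M) : Set M :=
  {ρ : M | ∃ (t : Fin k → ℝ) (x : Fin k → M),
    (∀ i, 0 ≤ t i) ∧ (∑ i, t i) = 1 ∧ (∀ i, x i ∈ X) ∧ (∑ i, t i • x i) = ρ}

/-- The operator `A ⊗ id` on `H ⊗ ℂᵏ ≅ H ⊕ ⋯ ⊕ H` (k summands). -/
def opBar (k : ℕ) (A : H →ₗ[ℂ] H) :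
    (PiLp 2 fun _ : Fin k => H) →ₗ[ℂ] (PiLp 2 fun _ : Fin k => H) where
  toFun x := WithLp.toLp 2 (fun i => A (x i))
  map_add' x y := by ext i; simp [PiLp.add_apply]
  map_smul' c x := by ext i; simp [PiLp.smul_apply]

/-- The potential map `v ↦ ι(v) ⊗ id` of the `k`-convexified functional theory. -/
def potBar (k : ℕ) (ι : V →ₗ[ℝ] (H →ₗ[ℂ] H)) :
    V →ₗ[ℝ] ((PiLp 2 fun _ : Fin k => H) →ₗ[ℂ] (PiLp 2 fun _ : Fin k => H)) where
  toFun v := opBar k (ι v)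
  map_add' v w := by
    apply LinearMap.ext; intro x; ext i
    simp [opBar, map_add]
  map_smul' c v := by
    apply LinearMap.ext; intro x; ext i
    simp [opBar, map_smul]

/-- The subspace of potentials mapped to real multiples of the identity operator. -/
def scalarPart (ι : V →ₗ[ℝ] (H →ₗ[ℂ] H)) : Submodule ℝ V where
  carrier := {v : V | ∃ c : ℝ, ι v = c • (LinearMap.id : H →ₗ[ℂ] H)}
  add_mem' := by
    rintro a b ⟨c, hc⟩ ⟨d, hd⟩
    exact ⟨c + d, by rw [map_add, hc, hd, add_smul]⟩
  zero_mem' := ⟨0, by simp⟩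
  smul_mem' := by
    rintro a v ⟨c, hc⟩
    exact ⟨a * c, by rw [map_smul, hc, smul_smul]⟩


/-! Let `ψ, ψ'` be ground states of `ι v + W` and `ι v' + W` with density `ρ`. Since the energies
depend on a state only through its density and its `W`-expectation, exchanging them in the
variational principle shows that `ψ'` is also a ground state of `ι v + W`; being a minimiser on the
unit sphere, it is an eigenvector of both Hamiltonians, hence of `ι (v - v')`. So every derivative
`2 Re⟨φ, ι(·)ψ'⟩` with `φ ⊥ ψ'` vanishes at `v - v'`, and by regularity so does every direction
of the affine span of the pure densities: `χ ↦ ⟨χ, ι(v - v')χ⟩` is constant on the unit sphere,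
which forces the symmetric operator `ι (v - v')` to be a scalar. -/

lemma expectation_add (T S : H →ₗ[ℂ] H) (x : H) :
    expectation (T + S) x = expectation T x + expectation S x := by
  simp [expectation, inner_add_right]

lemma expectation_smul (T : H →ₗ[ℂ] H) (a : ℂ) (x : H) :
    expectation T (a • x) = ‖a‖ ^ 2 * expectation T x := by
  simp only [expectation, map_smul, inner_smul_left, inner_smul_right, ← mul_assoc,
    Complex.mul_conj']
  rw [← Complex.ofReal_pow, Complex.re_ofReal_mul]

lemma expectation_smul_id (c : ℝ) (x : H) :
    expectation (c • LinearMap.id : H →ₗ[ℂ] H) x = c * ‖x‖ ^ 2 := by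
  rw [expectation, LinearMap.smul_apply, LinearMap.id_apply, ← Complex.coe_smul, inner_smul_right,
    Complex.re_ofReal_mul, ← RCLike.re_to_complex, inner_self_eq_norm_sq]

lemma expectation_add_pureDensity (ι : V →ₗ[ℝ] (H →ₗ[ℂ] H)) (W : H →ₗ[ℂ] H) (v : V) (x : H) :
    expectation (ι v + W) x = pureDensity ι x v + expectation W x :=
  expectation_add _ _ _

lemma toContinuousLinearMap_reApplyInnerSelf [FiniteDimensional ℂ H] (T : H →ₗ[ℂ] H) :
    (LinearMap.toContinuousLinearMap T).reApplyInnerSelf = expectation T := by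
  ext x
  exact inner_re_symm _ _

lemma bddBelow_expectation_sphere [FiniteDimensional ℂ H] (T : H →ₗ[ℂ] H) :
    BddBelow {r : ℝ | ∃ ψ : H, ‖ψ‖ = 1 ∧ r = expectation T ψ} := by
  set T' := LinearMap.toContinuousLinearMap T
  refine ⟨-‖T'‖, ?_⟩
  rintro r ⟨ψ, hψ, rfl⟩
  have : |expectation T ψ| ≤ ‖T'‖ := calc
    |expectation T ψ| ≤ ‖(inner ℂ ψ (T' ψ) : ℂ)‖ := Complex.abs_re_le_norm _
    _ ≤ ‖ψ‖ * ‖T' ψ‖ := norm_inner_le_norm _ _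
    _ ≤ ‖T'‖ := by simpa [hψ] using T'.le_opNorm ψ
  linarith [neg_abs_le (expectation T ψ)]

namespace LinearMap.IsSymmetric

variable {T : H →ₗ[ℂ] H}

lemma eq_zero_of_expectation_sphere_eq_zero (hT : T.IsSymmetric)
    (h : ∀ x : H, ‖x‖ = 1 → expectation T x = 0) : T = 0 := by
  have hexp (x : H) : expectation T x = 0 := by
    rcases eq_or_ne x 0 with rfl | hx
    · simp [expectation]
    have hx' : ‖x‖ ≠ 0 := norm_ne_zero_iff.mpr hx
    have hunit : ‖((‖x‖⁻¹ : ℝ) : ℂ) • x‖ = 1 := by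
      rw [norm_smul, Complex.norm_real, norm_inv, norm_norm, inv_mul_cancel₀ hx']
    have hsmul : x = ((‖x‖ : ℝ) : ℂ) • ((‖x‖⁻¹ : ℝ) : ℂ) • x := by
      rw [smul_smul, ← Complex.ofReal_mul, mul_inv_cancel₀ hx', Complex.ofReal_one, one_smul]
    rw [hsmul, expectation_smul, h _ hunit, mul_zero]
  refine hT.inner_map_self_eq_zero.mp fun x => ?_
  rw [hT x x, ← hT.coe_re_inner_self_apply x]
  exact congrArg Complex.ofReal (hexp x)

lemma eq_smul_id_of_expectation_sphere_eq (hT : T.IsSymmetric) {c : ℝ}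
    (h : ∀ x : H, ‖x‖ = 1 → expectation T x = c) : T = c • LinearMap.id := by
  have hid : (c • LinearMap.id : H →ₗ[ℂ] H).IsSymmetric := by
    intro x y
    simp only [LinearMap.smul_apply, LinearMap.id_apply, ← Complex.coe_smul, inner_smul_left,
      inner_smul_right, Complex.conj_ofReal]
  refine sub_eq_zero.mp (eq_zero_of_expectation_sphere_eq_zero (hT.sub hid) fun x hx => ?_)
  rw [sub_eq_add_neg, expectation_add, ← neg_smul, expectation_smul_id, h x hx, hx]
  ring

lemma exists_eigen_of_isMinOn_sphere [FiniteDimensional ℂ H] (hT : T.IsSymmetric) {x : H}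
    (hx : ‖x‖ = 1) (hmin : IsMinOn (expectation T) (Metric.sphere 0 1) x) :
    ∃ c : ℝ, T x = (c : ℂ) • x := by
  have hsa : IsSelfAdjoint (LinearMap.toContinuousLinearMap T) :=
    ContinuousLinearMap.isSelfAdjoint_iff_isSymmetric.mpr hT
  have hx0 : x ≠ 0 := norm_ne_zero_iff.mp (by rw [hx]; exact one_ne_zero)
  rw [← hx, ← toContinuousLinearMap_reApplyInnerSelf] at hmin
  exact ⟨_, Module.End.mem_eigenspace_iff.mp (hsa.hasEigenvector_of_isMinOn hx0 hmin).1⟩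

end LinearMap.IsSymmetric

section GroundState

variable [FiniteDimensional ℂ H] (ι : V →ₗ[ℝ] (H →ₗ[ℂ] H)) (W : H →ₗ[ℂ] H)

lemma energy_le_expectation (v : V) {x : H} (hx : ‖x‖ = 1) :
    energy ι W v ≤ expectation (ι v + W) x :=
  csInf_le (bddBelow_expectation_sphere _) ⟨x, hx, rfl⟩

lemma isMinOn_expectation_of_eq_energy {v : V} {x : H}
    (hE : expectation (ι v + W) x = energy ι W v) :
    IsMinOn (expectation (ι v + W)) (Metric.sphere 0 1) x := fun y hy => by
  rw [Set.mem_ofPred_eq, hE]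
  exact energy_le_expectation ι W v (mem_sphere_zero_iff_norm.mp hy)

lemma expectation_eq_energy_of_pureDensity_eq {v v' : V} {ψ ψ' : H}
    (hψ : ‖ψ‖ = 1) (hψ' : ‖ψ'‖ = 1)
    (hE : expectation (ι v + W) ψ = energy ι W v)
    (hE' : expectation (ι v' + W) ψ' = energy ι W v')
    (hρ : pureDensity ι ψ = pureDensity ι ψ') :
    expectation (ι v + W) ψ' = energy ι W v := by
  have h₁ := energy_le_expectation ι W v hψ'
  have h₂ := energy_le_expectation ι W v' hψ
  rw [expectation_add_pureDensity] at h₁ h₂ hE hE' ⊢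
  rw [hρ] at hE h₂
  linarith

end GroundState

lemma derivDensity_apply_eq_zero_of_eigen (ι : V →ₗ[ℝ] (H →ₗ[ℂ] H)) {Ψ φ : H} {u : V} {c : ℂ}
    (hu : ι u Ψ = c • Ψ) (hφ : inner ℂ φ Ψ = 0) : derivDensity ι Ψ φ u = 0 := by
  change 2 * (inner ℂ φ (ι u Ψ) : ℂ).re = 0
  rw [hu, inner_smul_right, hφ, mul_zero, Complex.zero_re, mul_zero]

theorem regular_value_uniquely_vrep_general [FiniteDimensional ℂ H]
    (ι : V →ₗ[ℝ] (H →ₗ[ℂ] H)) (W : H →ₗ[ℂ] H)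
    (hι : ∀ v : V, (ι v).IsSymmetric) (hW : W.IsSymmetric)
    (ρ : Module.Dual ℝ V)
    (hreg : ∀ ψ : H, ‖ψ‖ = 1 → pureDensity ι ψ = ρ →
      {d : Module.Dual ℝ V | ∃ φ : H, (inner ℂ φ ψ : ℂ) = 0 ∧ d = derivDensity ι ψ φ}
        = ↑(vectorSpan ℝ {σ : Module.Dual ℝ V | ∃ χ : H, ‖χ‖ = 1 ∧ pureDensity ι χ = σ})) :
    ∀ v v' : V,
      (∃ ψ : H, ‖ψ‖ = 1 ∧ expectation (ι v + W) ψ = energy ι W v ∧ pureDensity ι ψ = ρ) →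
      (∃ ψ : H, ‖ψ‖ = 1 ∧ expectation (ι v' + W) ψ = energy ι W v' ∧ pureDensity ι ψ = ρ) →
      ∃ c : ℝ, ι v - ι v' = c • (LinearMap.id : H →ₗ[ℂ] H) := by
  rintro v v' ⟨ψ, hψ, hE, hψρ⟩ ⟨ψ', hψ', hE', hψ'ρ⟩
  have hEv := expectation_eq_energy_of_pureDensity_eq ι W hψ hψ' hE hE' (hψρ.trans hψ'ρ.symm)
  obtain ⟨a, ha⟩ := ((hι v).add hW).exists_eigen_of_isMinOn_sphere hψ'
    (isMinOn_expectation_of_eq_energy ι W hEv)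
  obtain ⟨b, hb⟩ := ((hι v').add hW).exists_eigen_of_isMinOn_sphere hψ'
    (isMinOn_expectation_of_eq_energy ι W hE')
  have heigen : ι (v - v') ψ' = ((a : ℂ) - b) • ψ' := by
    rw [sub_smul, ← ha, ← hb, map_sub]
    simp
  have hvan : ∀ d ∈ vectorSpan ℝ {σ | ∃ χ : H, ‖χ‖ = 1 ∧ pureDensity ι χ = σ}, d (v - v') = 0 := by
    intro d hd
    rw [← SetLike.mem_coe, ← hreg ψ' hψ' hψ'ρ] at hd
    obtain ⟨φ, hφ, rfl⟩ := hd
    exact derivDensity_apply_eq_zero_of_eigen ι heigen hφ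
  refine ⟨ρ (v - v'), ?_⟩
  rw [← map_sub]
  refine (hι _).eq_smul_id_of_expectation_sphere_eq fun χ hχ => ?_
  exact sub_eq_zero.mp (hvan _ (vsub_mem_vectorSpan ℝ ⟨χ, hχ, rfl⟩ ⟨ψ', hψ', hψ'ρ⟩))

/-- regular values are uniquely v-representable. -/
theorem regular_value_uniquely_vrep [FiniteDimensional ℝ V] [FiniteDimensional ℂ H] [Nontrivial H]
    (ι : V →ₗ[ℝ] (H →ₗ[ℂ] H)) (W : H →ₗ[ℂ] H)
    (hι : ∀ v : V, (ι v).IsSymmetric) (hW : W.IsSymmetric)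
    (ρ : Module.Dual ℝ V)
    (hrep : ∃ v : V, ∃ ψ : H, ‖ψ‖ = 1 ∧ expectation (ι v + W) ψ = energy ι W v ∧
      pureDensity ι ψ = ρ)
    (hreg : ∀ ψ : H, ‖ψ‖ = 1 → pureDensity ι ψ = ρ →
      {d : Module.Dual ℝ V | ∃ φ : H, (inner ℂ φ ψ : ℂ) = 0 ∧ d = derivDensity ι ψ φ}
        = ↑(vectorSpan ℝ {σ : Module.Dual ℝ V | ∃ χ : H, ‖χ‖ = 1 ∧ pureDensity ι χ = σ})) :
    ∀ v v' : V,
      (∃ ψ : H, ‖ψ‖ = 1 ∧ expectation (ι v + W) ψ = energy ι W v ∧ pureDensity ι ψ = ρ) →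
      (∃ ψ : H, ‖ψ‖ = 1 ∧ expectation (ι v' + W) ψ = energy ι W v' ∧ pureDensity ι ψ = ρ) →
      ∃ c : ℝ, ι v - ι v' = c • (LinearMap.id : H →ₗ[ℂ] H) :=
  regular_value_uniquely_vrep_general ι W hι hW ρ hreg
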